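/- Let ū be an H-valued random variable with mean u, ‖u‖ ≤ L, E[‖ū − u‖²] ≤ σ²/m, and let ũ = min{λ/‖ū‖, 1}·ū with λ > L. Then the mean squared error satisfies E[‖ũ − u‖²] ≤ (σ²/m)·[1 + ((λ+L)/(λ−L))²]. -/

import Mathlib

/-!
Clipping is a contraction towards `u` up to the factor `c = (λ + L) / (λ - L)`, pointwise:
if `‖ū‖ ≤ λ` nothing changes and `c ≥ 1`; otherwise the clipped point lies within `λ + L` of `u`,
while `ū` itself is at distance at least `‖ū‖ - ‖u‖ > λ - L` from `u`. Squaring and integrating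
gives `E‖ũ - u‖² ≤ c² E‖ū - u‖² ≤ (σ² / m) (1 + c²)`.
-/

open MeasureTheory

section Clip

variable {E : Type*} [NormedAddCommGroup E] [NormedSpace ℝ E]

noncomputable def clip (lam : ℝ) (v : E) : E := min (lam / ‖v‖) 1 • v

theorem clip_of_norm_le {lam : ℝ} {v : E} (h : ‖v‖ ≤ lam) : clip lam v = v := by
  rcases eq_or_ne v 0 with rfl | hv
  · simp [clip]
  · rw [clip, min_eq_right ((one_le_div (norm_pos_iff.mpr hv)).mpr h), one_smul]

theorem norm_clip_of_le {lam : ℝ} {v : E} (hlam : 0 < lam) (h : lam ≤ ‖v‖) :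
    ‖clip lam v‖ = lam := by
  have hv : 0 < ‖v‖ := hlam.trans_le h
  rw [clip, min_eq_left ((div_le_one hv).mpr h), norm_smul, Real.norm_of_nonneg (by positivity),
    div_mul_cancel₀ _ hv.ne']

theorem norm_clip_sub_le {lam L : ℝ} {u : E} (v : E) (huL : ‖u‖ ≤ L) (hlam : L < lam) :
    ‖clip lam v - u‖ ≤ (lam + L) / (lam - L) * ‖v - u‖ := by
  have hgap : 0 < lam - L := sub_pos.mpr hlam
  have hL : 0 ≤ L := (norm_nonneg u).trans huL
  rcases le_or_gt ‖v‖ lam with h | h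
  · rw [clip_of_norm_le h]
    have : 1 ≤ (lam + L) / (lam - L) := (one_le_div hgap).mpr (by linarith)
    exact le_mul_of_one_le_left (norm_nonneg _) this
  · have hfar : lam - L ≤ ‖v - u‖ :=
      calc lam - L ≤ ‖v‖ - ‖u‖ := by linarith
        _ ≤ ‖v - u‖ := norm_sub_norm_le v u
    calc ‖clip lam v - u‖ ≤ ‖clip lam v‖ + ‖u‖ := norm_sub_le _ _
      _ ≤ lam + L := by rw [norm_clip_of_le (by linarith) h.le]; linarith
      _ = (lam + L) / (lam - L) * (lam - L) := (div_mul_cancel₀ _ hgap.ne').symm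
      _ ≤ (lam + L) / (lam - L) * ‖v - u‖ := by
        gcongr
        exact div_nonneg (by linarith) hgap.le

theorem integral_sq_norm_clip_sub_le {Ω : Type*} [MeasurableSpace Ω] (μ : Measure Ω)
    (f : Ω → E) {u : E} {L lam : ℝ} (huL : ‖u‖ ≤ L) (hlam : L < lam)
    (hf : Integrable (fun ω => ‖f ω - u‖ ^ 2) μ) :
    ∫ ω, ‖clip lam (f ω) - u‖ ^ 2 ∂μ
      ≤ ((lam + L) / (lam - L)) ^ 2 * ∫ ω, ‖f ω - u‖ ^ 2 ∂μ := by
  rw [← integral_const_mul]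
  refine integral_mono_of_nonneg (ae_of_all _ fun _ => by positivity) (hf.const_mul _)
    (ae_of_all _ fun ω => ?_)
  dsimp only
  rw [← mul_pow]
  exact pow_le_pow_left₀ (norm_nonneg _) (norm_clip_sub_le (f ω) huL hlam) 2

end Clip

theorem clipped_mse_general
    {H : Type*} [NormedAddCommGroup H] [InnerProductSpace ℝ H]
    {Ω : Type*} [MeasurableSpace Ω] (μ : Measure Ω)
    (ubar : Ω → H) (u : H) (L σ m lam : ℝ)
    (hlam : L < lam)
    (huL : ‖u‖ ≤ L)
    (hint2 : Integrable (fun ω => ‖ubar ω - u‖ ^ 2) μ)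
    (hvar : ∫ ω, ‖ubar ω - u‖ ^ 2 ∂μ ≤ σ ^ 2 / m) :
    ∫ ω, ‖(min (lam / ‖ubar ω‖) 1) • ubar ω - u‖ ^ 2 ∂μ
      ≤ σ ^ 2 / m * (1 + ((lam + L) / (lam - L)) ^ 2) := by
  set c := (lam + L) / (lam - L)
  have hmse_nonneg : 0 ≤ ∫ ω, ‖ubar ω - u‖ ^ 2 ∂μ := integral_nonneg fun _ => by positivity
  calc ∫ ω, ‖(min (lam / ‖ubar ω‖) 1) • ubar ω - u‖ ^ 2 ∂μ
      ≤ c ^ 2 * ∫ ω, ‖ubar ω - u‖ ^ 2 ∂μ := integral_sq_norm_clip_sub_le μ ubar huL hlam hint2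
    _ ≤ c ^ 2 * (σ ^ 2 / m) := by gcongr
    _ ≤ σ ^ 2 / m * (1 + c ^ 2) := by nlinarith

theorem clipped_mse
    {H : Type*} [NormedAddCommGroup H] [InnerProductSpace ℝ H] [CompleteSpace H]
    {Ω : Type*} [MeasurableSpace Ω] (μ : Measure Ω) [IsProbabilityMeasure μ]
    (ubar : Ω → H) (u : H) (L σ m lam : ℝ)
    (hL : 0 ≤ L) (hσ : 0 < σ) (hm : 0 < m) (hlam : L < lam)
    (huL : ‖u‖ ≤ L)
    (hintu : Integrable ubar μ)
    (hmean : ∫ ω, ubar ω ∂μ = u)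
    (hintmse : Integrable (fun ω => ‖(min (lam / ‖ubar ω‖) 1) • ubar ω - u‖ ^ 2) μ)
    (hint2 : Integrable (fun ω => ‖ubar ω - u‖ ^ 2) μ)
    (hvar : ∫ ω, ‖ubar ω - u‖ ^ 2 ∂μ ≤ σ ^ 2 / m) :
    ∫ ω, ‖(min (lam / ‖ubar ω‖) 1) • ubar ω - u‖ ^ 2 ∂μ
      ≤ σ ^ 2 / m * (1 + ((lam + L) / (lam - L)) ^ 2) :=
  clipped_mse_general μ ubar u L σ m lam hlam huL hint2 hvar
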